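/- Let N ≥ 4 be an integer, set ν = (N−3)/2, and define Λ(ρ) = (N−2) − ρ·K_{ν+1}(ρ)/K_ν(ρ) for ρ > 0. Then there exists a unique ρ_* > 0 with Λ(ρ_*) = 0. Moreover, every zero ρ of Λ in (0,∞) satisfies ρ < √(N−2) and Λ'(ρ) = ρ − (N−2)/ρ < 0; in particular Λ'(ρ_*) < 0, and the corresponding period T_* = 2π/ρ_* satisfies T_* > 2π/√(N−2). -/

import Mathlib

open Real Filter Topology

/-- The modified Bessel function of the second kind of order `ν`,
`K_ν(x) = ∫_0^∞ exp(−x cosh t) cosh(ν t) dt`. -/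
noncomputable def besselK (ν x : ℝ) : ℝ :=
  ∫ t in Set.Ioi (0 : ℝ), Real.exp (-x * Real.cosh t) * Real.cosh (ν * t)

/-- With `ν = (N−3)/2`, the function `Λ(ρ) = (N−2) − ρ K_{ν+1}(ρ)/K_ν(ρ)`. -/
noncomputable def LambdaFn (N : ℕ) (ρ : ℝ) : ℝ :=
  ((N : ℝ) - 2) -
    ρ * besselK (((N : ℝ) - 3) / 2 + 1) ρ / besselK (((N : ℝ) - 3) / 2) ρ


/-!
Write `q(ρ) = ρ K_{ν+1}(ρ) / K_ν(ρ)`, so that `Λ = (2ν + 1) - q`. Differentiating under the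
integral sign and integrating by parts give `K_ν' = -(K_{ν-1} + K_{ν+1}) / 2` and
`ρ K_{ν+1} = ρ K_{ν-1} + 2ν K_ν`, hence the Riccati equation `q' = q (q - 2ν) / ρ - ρ`.
The strict Turán inequality `K_ν² < K_{ν-1} K_{ν+1}`, obtained by integrating a pointwise
inequality between hyperbolic functions of `(t, u)` over the product measure, says exactly
`ρ² < q (q - 2ν)`, i.e. `Λ' < 0`: `Λ` is strictly decreasing on `(0, ∞)`.

Since `Λ = 1 - ρ K_{ν-1} / K_ν` and `K_{ν-1} ≤ K_ν` for `ν ≥ 1/2`, `Λ > 0` on `(0, 1)`.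
If `Λ(ρ) ≥ 0` then `q ≤ 2ν + 1 = N - 2`, so `ρ² < q (q - 2ν) ≤ q ≤ N - 2`; this makes `Λ`
negative for large `ρ` and bounds the zero, where `q = N - 2` turns the Riccati equation into
`Λ'(ρ) = ρ - (N - 2) / ρ`.
-/

open MeasureTheory Set

theorem one_add_sq_div_two_le_cosh (t : ℝ) : 1 + t ^ 2 / 2 ≤ cosh t := by
  have hsq : (t / 2) ^ 2 ≤ sinh (t / 2) ^ 2 :=
    sq_le_sq.2 (by rw [abs_sinh]; exact self_le_sinh_iff.2 (abs_nonneg _))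
  have hcosh : cosh t = 1 + 2 * sinh (t / 2) ^ 2 := by
    rw [← mul_div_cancel₀ t two_ne_zero, cosh_two_mul, cosh_sq]
    ring_nf
  linarith

theorem cosh_le_exp_abs (t : ℝ) : cosh t ≤ exp |t| := by
  rw [cosh_eq]
  linarith [exp_le_exp.2 (le_abs_self t), exp_le_exp.2 (neg_le_abs t)]

theorem abs_cosh_mul_le_exp {t : ℝ} (ht : 0 ≤ t) (ν : ℝ) : |cosh (ν * t)| ≤ exp (|ν| * t) := by
  rw [abs_of_pos (cosh_pos _), show |ν| * t = |ν * t| by rw [abs_mul, abs_of_nonneg ht]]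
  exact cosh_le_exp_abs _

theorem abs_sinh_mul_le_exp {t : ℝ} (ht : 0 ≤ t) (ν : ℝ) : |sinh (ν * t)| ≤ exp (|ν| * t) := by
  rw [abs_sinh, show |ν| * t = |ν * t| by rw [abs_mul, abs_of_nonneg ht]]
  exact (sinh_lt_cosh _).le.trans (by simpa using cosh_le_exp_abs |ν * t|)

theorem integrableOn_exp_mul_sub_mul_cosh {x : ℝ} (hx : 0 < x) (b : ℝ) :
    IntegrableOn (fun t => exp (b * t - x * cosh t)) (Ioi 0) := by
  have hdom : ∀ t, exp (b * t - x * cosh t) ≤ exp ((b + 1) ^ 2 / (2 * x)) * exp (-1 * t) := by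
    intro t
    rw [← exp_add]
    gcongr
    have hamgm : (b + 1) * t ≤ (b + 1) ^ 2 / (2 * x) + x * t ^ 2 / 2 := by
      rw [div_add' _ _ _ (by positivity), le_div_iff₀ (by positivity)]
      nlinarith [sq_nonneg (x * t - (b + 1))]
    nlinarith [one_add_sq_div_two_le_cosh t]
  refine ((exp_neg_integrableOn_Ioi 0 one_pos).const_mul (exp ((b + 1) ^ 2 / (2 * x)))).mono'
    (by fun_prop) ?_
  filter_upwards with t
  rw [norm_of_nonneg (exp_pos _).le]
  exact hdom t

theorem integrableOn_exp_neg_mul_cosh_mul {x : ℝ} (hx : 0 < x) (b : ℝ) {g : ℝ → ℝ}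
    (hg : Continuous g) (hgb : ∀ t, 0 < t → |g t| ≤ exp (b * t)) :
    IntegrableOn (fun t => exp (-x * cosh t) * g t) (Ioi 0) := by
  refine (integrableOn_exp_mul_sub_mul_cosh hx b).mono' (by fun_prop) ?_
  filter_upwards [ae_restrict_mem measurableSet_Ioi] with t ht
  rw [norm_mul, norm_of_nonneg (exp_pos _).le, Real.norm_eq_abs, sub_eq_neg_add, exp_add,
    neg_mul]
  gcongr
  exact hgb t ht

theorem integrableOn_besselK_integrand {x : ℝ} (hx : 0 < x) (ν : ℝ) :
    IntegrableOn (fun t => exp (-x * cosh t) * cosh (ν * t)) (Ioi 0) :=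
  integrableOn_exp_neg_mul_cosh_mul hx |ν| (by fun_prop) fun _ ht => abs_cosh_mul_le_exp ht.le ν

theorem setIntegral_Ioi_pos {f : ℝ → ℝ} {a : ℝ} (hf : IntegrableOn f (Ioi a))
    (hpos : ∀ t, a < t → 0 < f t) : 0 < ∫ t in Ioi a, f t := by
  rw [setIntegral_pos_iff_support_of_nonneg_ae
    (ae_restrict_of_forall_mem measurableSet_Ioi fun t ht => (hpos t ht).le) hf]
  calc (0 : ENNReal) < volume (Ioi a) := by simp
    _ ≤ volume (Function.support f ∩ Ioi a) :=
      measure_mono fun t ht => ⟨(hpos t ht).ne', ht⟩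

theorem besselK_pos (ν : ℝ) {x : ℝ} (hx : 0 < x) : 0 < besselK ν x :=
  setIntegral_Ioi_pos (integrableOn_besselK_integrand hx ν) fun _ _ => by positivity

theorem besselK_le_besselK {μ ν x : ℝ} (h : |μ| ≤ |ν|) (hx : 0 < x) :
    besselK μ x ≤ besselK ν x := by
  refine setIntegral_mono_on (integrableOn_besselK_integrand hx μ)
    (integrableOn_besselK_integrand hx ν) measurableSet_Ioi fun t _ => ?_
  gcongr
  rw [cosh_le_cosh, abs_mul, abs_mul]
  gcongr

theorem integral_exp_neg_mul_cosh_mul_sinh_mul_sinh {x : ℝ} (hx : 0 < x) (ν : ℝ) :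
    ∫ t in Ioi 0, exp (-x * cosh t) * (sinh t * sinh (ν * t)) =
      (besselK (ν + 1) x - besselK (ν - 1) x) / 2 := by
  have hprod : ∀ t, exp (-x * cosh t) * (sinh t * sinh (ν * t)) =
      (exp (-x * cosh t) * cosh ((ν + 1) * t) - exp (-x * cosh t) * cosh ((ν - 1) * t)) / 2 := by
    intro t
    rw [add_mul, sub_mul, one_mul, cosh_add, cosh_sub]
    ring
  simp_rw [hprod]
  rw [integral_div, integral_sub (integrableOn_besselK_integrand hx _)
    (integrableOn_besselK_integrand hx _)]
  rfl

theorem integral_exp_neg_mul_cosh_mul_cosh_mul_cosh {x : ℝ} (hx : 0 < x) (ν : ℝ) :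
    ∫ t in Ioi 0, exp (-x * cosh t) * (cosh t * cosh (ν * t)) =
      (besselK (ν - 1) x + besselK (ν + 1) x) / 2 := by
  have hprod : ∀ t, exp (-x * cosh t) * (cosh t * cosh (ν * t)) =
      (exp (-x * cosh t) * cosh ((ν - 1) * t) + exp (-x * cosh t) * cosh ((ν + 1) * t)) / 2 := by
    intro t
    rw [add_mul, sub_mul, one_mul, cosh_add, cosh_sub]
    ring
  simp_rw [hprod]
  rw [integral_div, integral_add (integrableOn_besselK_integrand hx _)
    (integrableOn_besselK_integrand hx _)]
  rfl

theorem mul_besselK_add_one {x : ℝ} (hx : 0 < x) (ν : ℝ) :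
    x * besselK (ν + 1) x = x * besselK (ν - 1) x + 2 * ν * besselK ν x := by
  set F : ℝ → ℝ := fun t => exp (-x * cosh t) * sinh (ν * t)
  set F' : ℝ → ℝ := fun t => ν * (exp (-x * cosh t) * cosh (ν * t)) -
    x * (exp (-x * cosh t) * (sinh t * sinh (ν * t)))
  have hF : ∀ t, HasDerivAt F (F' t) t := fun t =>
    ((((hasDerivAt_cosh t).const_mul (-x)).exp).mul
      (((hasDerivAt_id t).const_mul ν).sinh)).congr_deriv (by simp only [F', id]; ring)
  have hFint : IntegrableOn F (Ioi 0) :=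
    integrableOn_exp_neg_mul_cosh_mul hx |ν| (by fun_prop) fun _ ht => abs_sinh_mul_le_exp ht.le ν
  have hsinh : IntegrableOn (fun t => exp (-x * cosh t) * (sinh t * sinh (ν * t))) (Ioi 0) :=
    integrableOn_exp_neg_mul_cosh_mul hx (1 + |ν|) (by fun_prop) fun t ht => by
      rw [abs_mul, add_mul, exp_add]
      exact mul_le_mul (by simpa using abs_sinh_mul_le_exp ht.le 1)
        (abs_sinh_mul_le_exp ht.le ν) (abs_nonneg _) (exp_pos _).le
  have hF'int : IntegrableOn F' (Ioi 0) :=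
    ((integrableOn_besselK_integrand hx ν).const_mul ν).sub (hsinh.const_mul x)
  -- `F` vanishes at `0` and at infinity, so `∫ F' = 0`.
  have hFTC := integral_Ioi_of_hasDerivAt_of_tendsto' (fun t _ => hF t) hF'int
    (tendsto_zero_of_hasDerivAt_of_integrableOn_Ioi (fun t _ => hF t) hF'int hFint)
  rw [integral_sub ((integrableOn_besselK_integrand hx ν).const_mul ν) (hsinh.const_mul x),
    integral_const_mul, integral_const_mul, integral_exp_neg_mul_cosh_mul_sinh_mul_sinh hx] at hFTC
  simp only [F, mul_zero, sinh_zero, sub_zero] at hFTC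
  change ν * besselK ν x - x * ((besselK (ν + 1) x - besselK (ν - 1) x) / 2) = 0 at hFTC
  linarith

theorem hasDerivAt_besselK {x : ℝ} (hx : 0 < x) (ν : ℝ) :
    HasDerivAt (besselK ν) (-(besselK (ν - 1) x + besselK (ν + 1) x) / 2) x := by
  have hcosh : ∀ y, 0 < y →
      IntegrableOn (fun t => exp (-y * cosh t) * (cosh t * cosh (ν * t))) (Ioi 0) :=
    fun y hy => integrableOn_exp_neg_mul_cosh_mul hy (1 + |ν|) (by fun_prop) fun t ht => by
      rw [abs_mul, add_mul, exp_add]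
      exact mul_le_mul (by simpa using abs_cosh_mul_le_exp ht.le 1)
        (abs_cosh_mul_le_exp ht.le ν) (abs_nonneg _) (exp_pos _).le
  have key := hasDerivAt_integral_of_dominated_loc_of_deriv_le
    (μ := volume.restrict (Ioi 0)) (x₀ := x) (s := Metric.ball x (x / 2))
    (F := fun y t => exp (-y * cosh t) * cosh (ν * t))
    (F' := fun y t => -(exp (-y * cosh t) * (cosh t * cosh (ν * t))))
    (bound := fun t => exp (-(x / 2) * cosh t) * (cosh t * cosh (ν * t)))
    (Metric.ball_mem_nhds x (by positivity))
    (Eventually.of_forall fun y => (by fun_prop : Continuous _).aestronglyMeasurable)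
    (integrableOn_besselK_integrand hx ν)
    (by fun_prop : Continuous _).aestronglyMeasurable
    (Eventually.of_forall fun t y hy => ?_) (hcosh _ (by positivity))
    (Eventually.of_forall fun t y _ => ?_)
  · rw [integral_neg, integral_exp_neg_mul_cosh_mul_cosh_mul_cosh hx, ← neg_div] at key
    exact key.2
  · have hy2 : x / 2 < y := by
      rw [Metric.mem_ball, Real.dist_eq, abs_lt] at hy
      linarith
    rw [norm_neg, norm_of_nonneg (by positivity)]
    gcongr
  · exact ((((hasDerivAt_neg y).mul_const (cosh t)).exp).mul_const (cosh (ν * t))).congr_deriv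
      (by ring)

theorem sq_integral_add_sq_integral_le_integral_mul_integral {α : Type*} [MeasurableSpace α]
    {μ : Measure α} [SFinite μ] {f g p q : α → ℝ} (hf : Integrable f μ) (hg : Integrable g μ)
    (hp : Integrable p μ) (hq : Integrable q μ)
    (h : ∀ t u, f t * f u + g t * g u ≤ (p t * q u + q t * p u) / 2) :
    (∫ t, f t ∂μ) ^ 2 + (∫ t, g t ∂μ) ^ 2 ≤ (∫ t, p t ∂μ) * ∫ t, q t ∂μ := by
  have key : ∫ z, f z.1 * f z.2 + g z.1 * g z.2 ∂μ.prod μ ≤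
      ∫ z, (p z.1 * q z.2 + q z.1 * p z.2) / 2 ∂μ.prod μ :=
    integral_mono ((hf.mul_prod hf).add (hg.mul_prod hg))
      (((hp.mul_prod hq).add (hq.mul_prod hp)).div_const 2) fun z => h z.1 z.2
  rw [integral_add (hf.mul_prod hf) (hg.mul_prod hg), integral_div,
    integral_add (hp.mul_prod hq) (hq.mul_prod hp)] at key
  simp only [integral_prod_mul] at key
  linarith

theorem cosh_mul_cosh_add_sinh_mul_sinh_le (ν t u : ℝ) :
    cosh (ν * t) * cosh (ν * u) + sinh t * sinh u ≤
      (cosh ((ν - 1) * t) * cosh ((ν + 1) * u) + cosh ((ν + 1) * t) * cosh ((ν - 1) * u)) / 2 := by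
  have hgap : cosh ((ν - 1) * t) * cosh ((ν + 1) * u) + cosh ((ν + 1) * t) * cosh ((ν - 1) * u) -
      2 * (cosh (ν * t) * cosh (ν * u) + sinh t * sinh u) =
      cosh (ν * (t + u)) * (cosh (t - u) - 1) + (cosh (ν * (t - u)) - 1) * (cosh (t + u) - 1) +
        (cosh (t - u) - 1) := by
    simp only [sub_mul, add_mul, one_mul, mul_add, mul_sub, cosh_add, cosh_sub]
    ring
  have h₁ := one_le_cosh (t - u)
  have h₂ := one_le_cosh (t + u)
  have h₃ := one_le_cosh (ν * (t - u))
  nlinarith [cosh_pos (ν * (t + u))]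

theorem sq_besselK_lt_mul {x : ℝ} (hx : 0 < x) (ν : ℝ) :
    besselK ν x ^ 2 < besselK (ν - 1) x * besselK (ν + 1) x := by
  have hsinh : IntegrableOn (fun t => exp (-x * cosh t) * sinh t) (Ioi 0) :=
    integrableOn_exp_neg_mul_cosh_mul hx 1 (by fun_prop) fun t ht => by
      simpa using abs_sinh_mul_le_exp ht.le 1
  have hS : 0 < ∫ t in Ioi 0, exp (-x * cosh t) * sinh t :=
    setIntegral_Ioi_pos hsinh fun t ht => mul_pos (exp_pos _) (sinh_pos_iff.2 ht)
  have key := sq_integral_add_sq_integral_le_integral_mul_integral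
    (integrableOn_besselK_integrand hx ν) hsinh (integrableOn_besselK_integrand hx (ν - 1))
    (integrableOn_besselK_integrand hx (ν + 1)) fun t u => by
      have hw := mul_pos (exp_pos (-x * cosh t)) (exp_pos (-x * cosh u))
      linarith [mul_le_mul_of_nonneg_left (cosh_mul_cosh_add_sinh_mul_sinh_le ν t u) hw.le]
  change besselK ν x ^ 2 + _ ≤ besselK (ν - 1) x * besselK (ν + 1) x at key
  linarith [pow_pos hS 2]

noncomputable def besselKRatio (ν x : ℝ) : ℝ := x * besselK (ν + 1) x / besselK ν x

theorem besselKRatio_pos {x : ℝ} (hx : 0 < x) (ν : ℝ) : 0 < besselKRatio ν x :=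
  div_pos (mul_pos hx (besselK_pos _ hx)) (besselK_pos _ hx)

theorem besselKRatio_eq_mul_besselK_sub_one_div_add {x : ℝ} (hx : 0 < x) (ν : ℝ) :
    besselKRatio ν x = x * besselK (ν - 1) x / besselK ν x + 2 * ν := by
  have hK := besselK_pos ν hx
  rw [besselKRatio, mul_besselK_add_one hx]
  field_simp

theorem sq_lt_besselKRatio_mul {x : ℝ} (hx : 0 < x) (ν : ℝ) :
    x ^ 2 < besselKRatio ν x * (besselKRatio ν x - 2 * ν) := by
  have hK := besselK_pos ν hx
  have hq : besselKRatio ν x - 2 * ν = x * besselK (ν - 1) x / besselK ν x := by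
    rw [besselKRatio_eq_mul_besselK_sub_one_div_add hx]
    ring
  rw [hq, besselKRatio, div_mul_div_comm, lt_div_iff₀ (by positivity)]
  nlinarith [mul_lt_mul_of_pos_left (sq_besselK_lt_mul hx ν) (pow_pos hx 2)]

theorem hasDerivAt_besselKRatio {x : ℝ} (hx : 0 < x) (ν : ℝ) :
    HasDerivAt (besselKRatio ν) (besselKRatio ν x * (besselKRatio ν x - 2 * ν) / x - x) x := by
  have hK := besselK_pos ν hx
  have h₁ := hasDerivAt_besselK hx (ν + 1)
  have r₀ := mul_besselK_add_one hx ν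
  have r₁ := mul_besselK_add_one hx (ν + 1)
  rw [add_sub_cancel_right] at h₁ r₁
  have e₀ : besselK (ν - 1) x = (x * besselK (ν + 1) x - 2 * ν * besselK ν x) / x := by
    field_simp
    linarith
  have e₁ : besselK (ν + 1 + 1) x = (x * besselK ν x + 2 * (ν + 1) * besselK (ν + 1) x) / x := by
    field_simp
    linarith
  refine (((hasDerivAt_id x).mul h₁).div (hasDerivAt_besselK hx ν) hK.ne').congr_deriv ?_
  rw [e₀, e₁, besselKRatio]
  simp only [Pi.mul_apply, id]
  field_simp
  ring

section lambdaFn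

variable (N : ℕ)

theorem hasDerivAt_lambdaFn {ρ : ℝ} (hρ : 0 < ρ) :
    HasDerivAt (LambdaFn N) (ρ - besselKRatio (((N : ℝ) - 3) / 2) ρ *
      (besselKRatio (((N : ℝ) - 3) / 2) ρ - ((N : ℝ) - 3)) / ρ) ρ :=
  ((hasDerivAt_besselKRatio hρ _).const_sub ((N : ℝ) - 2)).congr_deriv (by ring)

theorem continuousOn_lambdaFn : ContinuousOn (LambdaFn N) (Ioi 0) :=
  fun _ hρ => (hasDerivAt_lambdaFn N hρ).continuousAt.continuousWithinAt

theorem strictAntiOn_lambdaFn : StrictAntiOn (LambdaFn N) (Ioi 0) := by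
  refine strictAntiOn_of_hasDerivWithinAt_neg (convex_Ioi 0) (continuousOn_lambdaFn N)
    (fun ρ hρ => (hasDerivAt_lambdaFn N (interior_subset hρ)).hasDerivWithinAt)
    fun ρ hρ => ?_
  rw [interior_Ioi] at hρ
  have hsq := sq_lt_besselKRatio_mul hρ (((N : ℝ) - 3) / 2)
  rw [mul_div_cancel₀ _ two_ne_zero] at hsq
  rw [sub_neg, lt_div_iff₀ hρ]
  linarith

theorem hasDerivAt_lambdaFn_of_eq_zero {ρ : ℝ} (hρ : 0 < ρ) (hz : LambdaFn N ρ = 0) :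
    HasDerivAt (LambdaFn N) (ρ - ((N : ℝ) - 2) / ρ) ρ := by
  have hq : besselKRatio (((N : ℝ) - 3) / 2) ρ = (N : ℝ) - 2 := by
    rw [LambdaFn, sub_eq_zero] at hz
    exact hz.symm
  refine (hasDerivAt_lambdaFn N hρ).congr_deriv ?_
  rw [hq]
  ring

theorem sq_lt_of_lambdaFn_nonneg {ρ : ℝ} (hρ : 0 < ρ) (h : 0 ≤ LambdaFn N ρ) :
    ρ ^ 2 < (N : ℝ) - 2 := by
  set q := besselKRatio (((N : ℝ) - 3) / 2) ρ
  have hsq := sq_lt_besselKRatio_mul hρ (((N : ℝ) - 3) / 2)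
  rw [mul_div_cancel₀ _ two_ne_zero] at hsq
  have hq : 0 < q := besselKRatio_pos hρ _
  have hqN : q ≤ (N : ℝ) - 2 := sub_nonneg.1 h
  nlinarith

theorem lambdaFn_pos (hN : 4 ≤ N) {ρ : ℝ} (hρ₀ : 0 < ρ) (hρ₁ : ρ < 1) : 0 < LambdaFn N ρ := by
  have hν : 1 / 2 ≤ ((N : ℝ) - 3) / 2 := by
    have : (4 : ℝ) ≤ N := by exact_mod_cast hN
    linarith
  set ν := ((N : ℝ) - 3) / 2
  have hK := besselK_pos ν hρ₀
  have hK₁ := besselK_pos (ν - 1) hρ₀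
  have habs : |ν - 1| ≤ |ν| := by
    rw [abs_of_pos (by linarith : 0 < ν), abs_le]
    constructor <;> linarith
  have hmono : besselK (ν - 1) ρ ≤ besselK ν ρ := besselK_le_besselK habs hρ₀
  have hΛ : LambdaFn N ρ = 1 - ρ * besselK (ν - 1) ρ / besselK ν ρ := by
    change (N : ℝ) - 2 - besselKRatio ν ρ = _
    rw [besselKRatio_eq_mul_besselK_sub_one_div_add hρ₀]
    ring
  rw [hΛ, sub_pos, div_lt_one hK]
  nlinarith

theorem lambdaFn_neg {ρ : ℝ} (hρ : 0 < ρ) (h : (N : ℝ) - 2 ≤ ρ ^ 2) : LambdaFn N ρ < 0 := by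
  by_contra! h'
  linarith [sq_lt_of_lambdaFn_nonneg N hρ h']

end lambdaFn

theorem stmt17 (N : ℕ) (hN : 4 ≤ N) :
    (∃! ρ : ℝ, 0 < ρ ∧ LambdaFn N ρ = 0) ∧
    (∀ ρ : ℝ, 0 < ρ → LambdaFn N ρ = 0 →
      ρ < Real.sqrt ((N : ℝ) - 2) ∧
      deriv (LambdaFn N) ρ = ρ - ((N : ℝ) - 2) / ρ ∧
      deriv (LambdaFn N) ρ < 0 ∧
      2 * π / Real.sqrt ((N : ℝ) - 2) < 2 * π / ρ) := by
  have hN' : (4 : ℝ) ≤ N := by exact_mod_cast hN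
  refine ⟨?_, fun ρ hρ hz => ?_⟩
  · have hhalf : (0 : ℝ) < 1 / 2 := by norm_num
    obtain ⟨ρ₀, hρ₀, hz₀⟩ := intermediate_value_Ioo' (by linarith : (1 / 2 : ℝ) ≤ N - 2)
      ((continuousOn_lambdaFn N).mono fun ρ hρ => hhalf.trans_le hρ.1)
      ⟨lambdaFn_neg N (by linarith) (by nlinarith),
        lambdaFn_pos N hN hhalf (by norm_num)⟩
    have hρ₀pos : 0 < ρ₀ := hhalf.trans hρ₀.1
    exact ⟨ρ₀, ⟨hρ₀pos, hz₀⟩, fun ρ hρ =>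
      (strictAntiOn_lambdaFn N).injOn hρ.1 hρ₀pos (hρ.2.trans hz₀.symm)⟩
  · have hsq := sq_lt_of_lambdaFn_nonneg N hρ hz.ge
    have hlt : ρ < √((N : ℝ) - 2) := (lt_sqrt hρ.le).2 hsq
    have hderiv := (hasDerivAt_lambdaFn_of_eq_zero N hρ hz).deriv
    refine ⟨hlt, hderiv, ?_, div_lt_div_of_pos_left (by positivity) hρ hlt⟩
    rw [hderiv, sub_neg, lt_div_iff₀ hρ]
    nlinarith
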